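/- arXiv:2006.15529 — 5 statements merged into one kernel-verified Lean document; each statement's English description precedes it below -/
import Mathlib

section
/- The function r(l) = cleaf_2(l), defined on [0, π_2/2] as the inverse of r ↦ ∫_r^1 dt/√(1-t⁴), satisfies the differential equation r''(l) = -2 r(l)³ with initial conditions r(0) = 1 and r'(0) = 0. -/
/-!
On the interior of `[0, π₂/2]`, `cleaf` inverts `arccleaf`, whose derivative is `-1/√(1 - r⁴)`,
so `cleaf' = -√(1 - cleaf⁴)` by the inverse function theorem and then `cleaf'' = -2 cleaf³` by the
chain rule. At the endpoints (notably at `l = 0`, where `cleaf = 1` and `arccleaf'` blows up) both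
formulas persist because their right-hand sides are continuous up to the boundary, and a function
whose derivative extends continuously to an endpoint is differentiable there with that derivative.
-/

open Set Filter Topology MeasureTheory intervalIntegral

theorem hasDerivWithinAt_Icc_of_hasDerivAt_Ioo {E : Type*} [NormedAddCommGroup E]
    [NormedSpace ℝ E] {f f' : ℝ → E} {a b x : ℝ} (hab : a < b)
    (hf : ContinuousOn f (Icc a b)) (hf' : ContinuousOn f' (Icc a b))
    (hderiv : ∀ y ∈ Ioo a b, HasDerivAt f (f' y) y) (hx : x ∈ Icc a b) :
    HasDerivWithinAt f (f' x) (Icc a b) x := by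
  have hdiff : DifferentiableOn ℝ f (Ioo a b) := fun y hy =>
    (hderiv y hy).differentiableAt.differentiableWithinAt
  have hderiv_eq : ∀ y ∈ Ioo a b, f' y = deriv f y := fun y hy => (hderiv y hy).deriv.symm
  rcases hx.1.eq_or_lt with rfl | hax
  · refine (hasDerivWithinAt_Ici_of_tendsto_deriv hdiff ((hf _ hx).mono Ioo_subset_Icc_self)
      (Ioo_mem_nhdsGT hab) ?_).mono Icc_subset_Ici_self
    rw [← nhdsWithin_Ioo_eq_nhdsGT hab]
    exact ((hf' _ hx).mono Ioo_subset_Icc_self).tendsto.congr'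
      (eventually_nhdsWithin_of_forall hderiv_eq)
  rcases hx.2.eq_or_lt with rfl | hxb
  · refine (hasDerivWithinAt_Iic_of_tendsto_deriv hdiff ((hf _ hx).mono Ioo_subset_Icc_self)
      (Ioo_mem_nhdsLT hab) ?_).mono Icc_subset_Iic_self
    rw [← nhdsWithin_Ioo_eq_nhdsLT hab]
    exact ((hf' _ hx).mono Ioo_subset_Icc_self).tendsto.congr'
      (eventually_nhdsWithin_of_forall hderiv_eq)
  exact (hderiv x ⟨hax, hxb⟩).hasDerivWithinAt

theorem ContinuousOn.continuousOn_of_rightInvOn {α β : Type*} [TopologicalSpace α]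
    [TopologicalSpace β] [T2Space β] {f : α → β} {g : β → α} {s : Set α} {t : Set β}
    (hs : IsCompact s) (hf : ContinuousOn f s) (hinj : InjOn f s) (hg : MapsTo g t s)
    (hfg : RightInvOn g f t) : ContinuousOn g t := by
  have : CompactSpace s := isCompact_iff_compactSpace.1 hs
  have hemb : IsEmbedding (s.domRestrict f) :=
    (hf.domRestrict.isClosedEmbedding hinj.injective).isEmbedding
  have hg_cont : Continuous (hg.restrict g t s) := by
    rw [hemb.continuous_iff]
    exact continuous_subtype_val.congr fun y => (hfg y.2).symm
  rw [continuousOn_iff_continuous_domRestrict]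
  exact continuous_subtype_val.comp hg_cont

noncomputable def arccleaf (r : ℝ) : ℝ := ∫ t in r..1, 1 / √(1 - t ^ 4)

theorem measurable_one_div_sqrt_one_sub_pow_four :
    Measurable fun t : ℝ => 1 / √(1 - t ^ 4) := by
  fun_prop

theorem intervalIntegrable_one_div_sqrt_one_sub_pow_four {a b : ℝ} (ha : a ∈ Icc (0 : ℝ) 1)
    (hb : b ∈ Icc (0 : ℝ) 1) :
    IntervalIntegrable (fun t : ℝ => 1 / √(1 - t ^ 4)) volume a b := by
  have hdom : IntervalIntegrable (fun t : ℝ => (1 - t) ^ (-(1 / 2) : ℝ)) volume 0 1 := by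
    simpa using ((intervalIntegrable_rpow' (by norm_num : (-1 : ℝ) < -(1 / 2))
      (a := 0) (b := 1)).comp_sub_left 1).symm
  have h01 : IntervalIntegrable (fun t : ℝ => 1 / √(1 - t ^ 4)) volume 0 1 := by
    refine hdom.mono_fun' measurable_one_div_sqrt_one_sub_pow_four.aestronglyMeasurable ?_
    rw [EventuallyLE, uIoc_of_le zero_le_one]
    filter_upwards [ae_restrict_mem measurableSet_Ioc] with t ⟨ht0, ht1⟩
    rw [Real.norm_of_nonneg (by positivity), Real.rpow_neg (by linarith), ← Real.sqrt_eq_rpow,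
      one_div]
    rcases ht1.eq_or_lt with rfl | ht1
    · simp
    have : 0 < 1 - t := by linarith
    gcongr
    nlinarith [pow_le_one₀ ht0.le ht1.le (n := 3)]
  refine h01.mono_set ?_
  rw [uIcc_of_le zero_le_one]
  exact uIcc_subset_Icc ha hb

theorem arccleaf_one : arccleaf 1 = 0 := integral_same

theorem continuousOn_arccleaf : ContinuousOn arccleaf (Icc 0 1) := by
  have := continuousOn_primitive_interval_left (a := 0) (b := 1) (μ := volume) <| by
    rw [uIcc_of_le zero_le_one]
    exact (intervalIntegrable_iff_integrableOn_Icc_of_le zero_le_one).1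
      (intervalIntegrable_one_div_sqrt_one_sub_pow_four (left_mem_Icc.2 zero_le_one)
        (right_mem_Icc.2 zero_le_one))
  rwa [uIcc_of_le zero_le_one] at this

theorem hasDerivAt_arccleaf {r : ℝ} (hr : r ∈ Ico (0 : ℝ) 1) :
    HasDerivAt arccleaf (-(1 / √(1 - r ^ 4))) r := by
  have h4 : r ^ 4 < 1 := pow_lt_one₀ hr.1 hr.2 four_ne_zero
  have : √(1 - r ^ 4) ≠ 0 := (Real.sqrt_pos.2 (by linarith)).ne'
  exact integral_hasDerivAt_left
    (intervalIntegrable_one_div_sqrt_one_sub_pow_four (Ico_subset_Icc_self hr)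
      (right_mem_Icc.2 zero_le_one))
    measurable_one_div_sqrt_one_sub_pow_four.stronglyMeasurable.stronglyMeasurableAtFilter
    (by fun_prop (disch := assumption))

theorem strictAntiOn_arccleaf : StrictAntiOn arccleaf (Icc 0 1) := by
  refine strictAntiOn_of_deriv_neg (convex_Icc 0 1) continuousOn_arccleaf fun r hr => ?_
  rw [interior_Icc] at hr
  rw [(hasDerivAt_arccleaf (Ioo_subset_Ico_self hr)).deriv, neg_lt_zero]
  have : r ^ 4 < 1 := pow_lt_one₀ hr.1.le hr.2 four_ne_zero
  have : 0 < √(1 - r ^ 4) := Real.sqrt_pos.2 (by linarith)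
  positivity

theorem arccleaf_zero_pos : 0 < arccleaf 0 := by
  simpa [arccleaf_one] using
    strictAntiOn_arccleaf (left_mem_Icc.2 zero_le_one) (right_mem_Icc.2 zero_le_one) one_pos

theorem hasDerivAt_neg_sqrt_one_sub_pow_four {r : ℝ} (hr : r ^ 4 < 1) :
    HasDerivAt (fun r : ℝ => -√(1 - r ^ 4)) (2 * r ^ 3 / √(1 - r ^ 4)) r := by
  refine (((hasDerivAt_pow 4 r).const_sub 1).sqrt (by linarith)).neg.congr_deriv ?_
  have : √(1 - r ^ 4) ≠ 0 := (Real.sqrt_pos.2 (by linarith)).ne'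
  field_simp
  norm_num

section Inverse

variable {cleaf : ℝ → ℝ} (hmaps : MapsTo cleaf (Icc 0 (arccleaf 0)) (Icc 0 1))
  (hinv : RightInvOn cleaf arccleaf (Icc 0 (arccleaf 0)))
include hmaps hinv

theorem cleaf_zero : cleaf 0 = 1 := by
  have h0 : (0 : ℝ) ∈ Icc 0 (arccleaf 0) := left_mem_Icc.2 arccleaf_zero_pos.le
  exact strictAntiOn_arccleaf.injOn (hmaps h0) (right_mem_Icc.2 zero_le_one)
    (by rw [hinv h0, arccleaf_one])

theorem cleaf_mem_Ioo {l : ℝ} (hl : l ∈ Ioo 0 (arccleaf 0)) : cleaf l ∈ Ioo 0 1 := by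
  have hl' := Ioo_subset_Icc_self hl
  refine ⟨(hmaps hl').1.lt_of_ne fun h => ?_, (hmaps hl').2.lt_of_ne fun h => ?_⟩
  · exact hl.2.ne (by rw [← hinv hl', ← h])
  · exact hl.1.ne' (by rw [← hinv hl', h, arccleaf_one])

theorem continuousOn_cleaf : ContinuousOn cleaf (Icc 0 (arccleaf 0)) :=
  continuousOn_arccleaf.continuousOn_of_rightInvOn isCompact_Icc strictAntiOn_arccleaf.injOn
    hmaps hinv

theorem hasDerivAt_cleaf {l : ℝ} (hl : l ∈ Ioo 0 (arccleaf 0)) :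
    HasDerivAt cleaf (-√(1 - cleaf l ^ 4)) l := by
  have hr := cleaf_mem_Ioo hmaps hinv hl
  have : cleaf l ^ 4 < 1 := pow_lt_one₀ hr.1.le hr.2 four_ne_zero
  have : 0 < √(1 - cleaf l ^ 4) := Real.sqrt_pos.2 (by linarith)
  have hnhds : Icc 0 (arccleaf 0) ∈ 𝓝 l := Icc_mem_nhds hl.1 hl.2
  simpa using (hasDerivAt_arccleaf (Ioo_subset_Ico_self hr)).of_local_left_inverse
    ((continuousOn_cleaf hmaps hinv).continuousAt hnhds) (neg_ne_zero.2 (one_div_pos.2 this).ne')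
    (eventually_of_mem hnhds hinv)

theorem hasDerivWithinAt_cleaf {l : ℝ} (hl : l ∈ Icc 0 (arccleaf 0)) :
    HasDerivWithinAt cleaf (-√(1 - cleaf l ^ 4)) (Icc 0 (arccleaf 0)) l := by
  have hc := continuousOn_cleaf hmaps hinv
  exact hasDerivWithinAt_Icc_of_hasDerivAt_Ioo (f' := fun l => -√(1 - cleaf l ^ 4))
    arccleaf_zero_pos hc (by fun_prop) (fun _ hy => hasDerivAt_cleaf hmaps hinv hy) hl

theorem hasDerivWithinAt_neg_sqrt_one_sub_cleaf_pow_four {l : ℝ}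
    (hl : l ∈ Icc 0 (arccleaf 0)) :
    HasDerivWithinAt (fun l => -√(1 - cleaf l ^ 4)) (-2 * cleaf l ^ 3) (Icc 0 (arccleaf 0)) l := by
  have hc := continuousOn_cleaf hmaps hinv
  refine hasDerivWithinAt_Icc_of_hasDerivAt_Ioo (f' := fun l => -2 * cleaf l ^ 3)
    arccleaf_zero_pos (by fun_prop) (by fun_prop) (fun y hy => ?_) hl
  have hr := cleaf_mem_Ioo hmaps hinv hy
  have h4 : cleaf y ^ 4 < 1 := pow_lt_one₀ hr.1.le hr.2 four_ne_zero
  have : √(1 - cleaf y ^ 4) ≠ 0 := (Real.sqrt_pos.2 (by linarith)).ne'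
  refine ((hasDerivAt_neg_sqrt_one_sub_pow_four h4).comp y
    (hasDerivAt_cleaf hmaps hinv hy)).congr_deriv ?_
  field_simp

end Inverse

theorem cleaf_ode (π₂ : ℝ) (hπ : π₂ = 2 * ∫ t in (0:ℝ)..1, 1 / Real.sqrt (1 - t ^ 4))
    (cleaf : ℝ → ℝ)
    (hc : ∀ l ∈ Set.Icc 0 (π₂ / 2), cleaf l ∈ Set.Icc (0:ℝ) 1 ∧
      (∫ t in (cleaf l)..1, 1 / Real.sqrt (1 - t ^ 4)) = l) :
    (∀ l ∈ Set.Icc 0 (π₂ / 2),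
      derivWithin (derivWithin cleaf (Set.Icc 0 (π₂ / 2))) (Set.Icc 0 (π₂ / 2)) l
        = -2 * (cleaf l) ^ 3) ∧
    cleaf 0 = 1 ∧ derivWithin cleaf (Set.Icc 0 (π₂ / 2)) 0 = 0 := by
  have hL : π₂ / 2 = arccleaf 0 := by rw [hπ, arccleaf]; ring
  rw [hL] at hc ⊢
  have hmaps : MapsTo cleaf (Icc 0 (arccleaf 0)) (Icc 0 1) := fun l hl => (hc l hl).1
  have hinv : RightInvOn cleaf arccleaf (Icc 0 (arccleaf 0)) := fun l hl => (hc l hl).2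
  have hud := uniqueDiffOn_Icc arccleaf_zero_pos
  have hderiv : ∀ l ∈ Icc 0 (arccleaf 0),
      derivWithin cleaf (Icc 0 (arccleaf 0)) l = -√(1 - cleaf l ^ 4) := fun l hl =>
    (hasDerivWithinAt_cleaf hmaps hinv hl).derivWithin (hud l hl)
  refine ⟨fun l hl => ?_, cleaf_zero hmaps hinv, ?_⟩
  · rw [derivWithin_congr hderiv (hderiv l hl)]
    exact (hasDerivWithinAt_neg_sqrt_one_sub_cleaf_pow_four hmaps hinv hl).derivWithin (hud l hl)
  · rw [hderiv 0 (left_mem_Icc.2 arccleaf_zero_pos.le), cleaf_zero hmaps hinv]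
    norm_num
end

section
/- For all l ∈ [0, π_2/2], the derivative of cleaf_2 satisfies cleaf_2'(l) = -√(1 - cleaf_2(l)⁴). -/
open intervalIntegral Real Set MeasureTheory Filter Topology

noncomputable def lf : ℝ → ℝ := fun t => 1 / Real.sqrt (1 - t ^ 4)

lemma lf_nonneg (t : ℝ) : 0 ≤ lf t := by unfold lf; positivity

lemma lf_meas : Measurable lf :=
  measurable_const.div ((continuous_const.sub (continuous_pow 4)).sqrt.measurable)

lemma pow4_le {t : ℝ} (h0 : 0 ≤ t) (h1 : t ≤ 1) : t ^ 4 ≤ t := by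
  calc t ^ 4 = t * t ^ 3 := by ring
  _ ≤ t * 1 := mul_le_mul_of_nonneg_left (pow_le_one₀ h0 h1) h0
  _ = t := by ring

lemma lf_pos {t : ℝ} (h0 : 0 ≤ t) (h1 : t < 1) : 0 < lf t := by
  have h : t ^ 4 < 1 := lt_of_le_of_lt (pow4_le h0 h1.le) h1
  have : (0:ℝ) < Real.sqrt (1 - t ^ 4) := Real.sqrt_pos.2 (by linarith)
  unfold lf; positivity

lemma lf_le {t : ℝ} (h0 : 0 ≤ t) (h1 : t ≤ 1) : lf t ≤ (1 - t) ^ (-(1/2) : ℝ) := by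
  rcases eq_or_lt_of_le h1 with rfl | h1
  · simp [lf, Real.zero_rpow]
  · have ht : (0:ℝ) < 1 - t := by linarith
    have h4 : 1 - t ≤ 1 - t ^ 4 := by have := pow4_le h0 h1.le; linarith
    rw [Real.rpow_neg ht.le, ← Real.sqrt_eq_rpow, ← one_div]
    exact one_div_le_one_div_of_le (Real.sqrt_pos.2 ht) (Real.sqrt_le_sqrt h4)

lemma lf_ge {t : ℝ} (h0 : 0 ≤ t) (h1 : t ≤ 1) : (1/2) * (1 - t) ^ (-(1/2) : ℝ) ≤ lf t := by
  rcases eq_or_lt_of_le h1 with rfl | h1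
  · simp [lf, Real.zero_rpow]
  · have ht : (0:ℝ) < 1 - t := by linarith
    have hp := pow4_le h0 h1.le
    have h4 : 1 - t ^ 4 ≤ 4 * (1 - t) := by
      have h2 : t ^ 2 ≤ 1 := pow_le_one₀ h0 h1.le
      have h3 : t ^ 3 ≤ 1 := pow_le_one₀ h0 h1.le
      have key : (1-t)*(1+t+t^2+t^3) ≤ (1-t)*4 :=
        mul_le_mul_of_nonneg_left (by linarith) ht.le
      nlinarith [key]
    have h4' : (0:ℝ) < 1 - t ^ 4 := by nlinarith
    rw [Real.rpow_neg ht.le, ← Real.sqrt_eq_rpow, ← one_div]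
    have hs : Real.sqrt (1 - t ^ 4) ≤ 2 * Real.sqrt (1 - t) := by
      have h2 : √(1 - t ^ 4) ≤ √4 * √(1 - t) := by
        rw [← Real.sqrt_mul (by norm_num)]; exact Real.sqrt_le_sqrt h4
      have h42 : √(4:ℝ) = 2 := by
        rw [show (4:ℝ) = 2^2 by norm_num, Real.sqrt_sq]; norm_num
      rwa [h42] at h2
    have hsp : (0:ℝ) < Real.sqrt (1 - t ^ 4) := Real.sqrt_pos.2 h4'
    have heq : 1/2 * (1/√(1-t)) = 1/(2*√(1-t)) := by ring
    rw [heq]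
    exact one_div_le_one_div_of_le hsp hs
lemma rp_intble (a b : ℝ) : IntervalIntegrable (fun t => ((1:ℝ)-t) ^ (-(1/2):ℝ)) volume a b := by
  have h := (intervalIntegrable_rpow' (a := 1-a) (b := 1-b)
    (r := (-(1/2):ℝ)) (by norm_num)).comp_sub_left 1
  simpa using h

lemma lf_intble {a b : ℝ} (ha : 0 ≤ a) (hab : a ≤ b) (hb : b ≤ 1) :
    IntervalIntegrable lf volume a b := by
  apply (rp_intble a b).mono_fun' (lf_meas.aestronglyMeasurable.restrict)
  filter_upwards [MeasureTheory.ae_restrict_mem measurableSet_uIoc] with x hx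
  rw [Set.uIoc_of_le hab] at hx
  rw [Real.norm_eq_abs, abs_of_nonneg (lf_nonneg x)]
  exact lf_le (le_trans ha hx.1.le) (hx.2.trans hb)

lemma rp_int {r : ℝ} (h1 : r ≤ 1) : ∫ t in r..1, ((1:ℝ)-t) ^ (-(1/2):ℝ) = 2 * Real.sqrt (1-r) := by
  rw [show (∫ t in r..1, ((1:ℝ)-t) ^ (-(1/2):ℝ)) = ∫ t in r..1, (fun x => x ^ (-(1/2):ℝ)) (1-t) from rfl,
    intervalIntegral.integral_comp_sub_left (fun x => x ^ (-(1/2):ℝ)) 1,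
    integral_rpow (Or.inl (by norm_num))]
  rw [Real.sqrt_eq_rpow]
  norm_num
  ring

lemma LF_lower {r : ℝ} (h0 : 0 ≤ r) (h1 : r ≤ 1) : Real.sqrt (1-r) ≤ ∫ t in r..1, lf t := by
  have hmono := intervalIntegral.integral_mono_on h1
    (((rp_intble r 1).const_mul (1/2 : ℝ)))
    (lf_intble h0 h1 le_rfl)
    (fun x hx => lf_ge (le_trans h0 hx.1) hx.2)
  rw [intervalIntegral.integral_const_mul, rp_int h1] at hmono
  linarith
noncomputable def LF : ℝ → ℝ := fun r => ∫ t in r..1, lf t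

lemma LF_one : LF 1 = 0 := by simp [LF]

lemma LF_lower' {r : ℝ} (h0 : 0 ≤ r) (h1 : r ≤ 1) : Real.sqrt (1-r) ≤ LF r := LF_lower h0 h1

lemma LF_sub {a b : ℝ} (ha : 0 ≤ a) (hab : a ≤ b) (hb : b ≤ 1) :
    LF a - LF b = ∫ t in a..b, lf t := by
  have h := intervalIntegral.integral_add_adjacent_intervals
    (lf_intble ha hab hb) (lf_intble (ha.trans hab) hb le_rfl)
  unfold LF
  linarith

lemma LF_strictAnti : StrictAntiOn LF (Icc (0:ℝ) 1) := by
  intro a ha b hb hab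
  have h := LF_sub ha.1 hab.le hb.2
  have hpos : 0 < ∫ t in a..b, lf t :=
    intervalIntegral.intervalIntegral_pos_of_pos_on (lf_intble ha.1 hab.le hb.2)
      (fun x hx => lf_pos (ha.1.trans hx.1.le) (lt_of_lt_of_le hx.2 hb.2)) hab
  linarith

lemma LF_anti : AntitoneOn LF (Icc (0:ℝ) 1) := LF_strictAnti.antitoneOn

lemma LF_cont_at {x : ℝ} (h0 : 0 ≤ x) (h1 : x < 1) : ContinuousAt lf x := by
  have h4 : x ^ 4 < 1 := by nlinarith [pow_le_one₀ h0 h1.le (n := 3)]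
  have hs : Real.sqrt (1 - x ^ 4) ≠ 0 := ne_of_gt (Real.sqrt_pos.2 (by linarith))
  exact (continuousAt_const.div
    ((continuous_const.sub (continuous_pow 4)).sqrt.continuousAt) hs)

lemma LF_hasDeriv {x : ℝ} (h0 : 0 ≤ x) (h1 : x < 1) :
    HasDerivWithinAt LF (-(lf x)) (Icc (0:ℝ) 1) x := by
  have hG : HasDerivAt (fun r => ∫ t in (0:ℝ)..r, lf t) (lf x) x :=
    intervalIntegral.integral_hasDerivAt_right (lf_intble le_rfl h0 h1.le)
      (lf_meas.stronglyMeasurable.stronglyMeasurableAtFilter) (LF_cont_at h0 h1)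
  have h2 : HasDerivWithinAt (fun r => LF 0 - ∫ t in (0:ℝ)..r, lf t) (-(lf x)) (Icc (0:ℝ) 1) x := by
    simpa using (hG.hasDerivWithinAt (s := Icc (0:ℝ) 1)).const_sub (LF 0)
  apply h2.congr
  · intro y hy
    have h := LF_sub (le_refl 0) hy.1 hy.2
    linarith
  · have h := LF_sub (le_refl 0) h0 h1.le
    linarith

lemma inv_deriv {F g : ℝ → ℝ} {s u : Set ℝ} {a f' : ℝ} (ha : a ∈ s)
    (hmaps : ∀ l ∈ s, g l ∈ u) (hinv : ∀ l ∈ s, F (g l) = l)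
    (hg : ContinuousWithinAt g s a) (hF : HasDerivWithinAt F f' u (g a)) (hf' : f' ≠ 0) :
    HasDerivWithinAt g f'⁻¹ s a := by
  rw [hasDerivWithinAt_iff_tendsto_slope]
  have hne : ∀ l ∈ s, l ≠ a → g l ≠ g a := fun l hl hla h =>
    hla (by rw [← hinv l hl, h, hinv a ha])
  have h1 : Tendsto (slope F (g a)) (𝓝[u \ {g a}] (g a)) (𝓝 f') :=
    hasDerivWithinAt_iff_tendsto_slope.1 hF
  have h2 : Tendsto g (𝓝[s \ {a}] a) (𝓝[u \ {g a}] (g a)) := by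
    rw [tendsto_nhdsWithin_iff]
    constructor
    · exact hg.tendsto.mono_left (nhdsWithin_mono a diff_subset)
    · filter_upwards [self_mem_nhdsWithin] with l hl
      exact ⟨hmaps l hl.1, hne l hl.1 hl.2⟩
  have h3 : Tendsto (fun l => slope F (g a) (g l)) (𝓝[s \ {a}] a) (𝓝 f') := h1.comp h2
  have h4 := h3.inv₀ hf'
  apply h4.congr'
  filter_upwards [self_mem_nhdsWithin] with l hl
  have hgl := hne l hl.1 hl.2
  have hla : l - a ≠ 0 := sub_ne_zero.2 hl.2
  have hgla : g l - g a ≠ 0 := sub_ne_zero.2 hgl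
  rw [slope_def_field, slope_def_field, hinv l hl.1, hinv a ha]
  field_simp

theorem cleaf_deriv (π₂ : ℝ) (hπ : π₂ = 2 * ∫ t in (0:ℝ)..1, 1 / Real.sqrt (1 - t ^ 4))
    (cleaf : ℝ → ℝ)
    (hc : ∀ l ∈ Set.Icc 0 (π₂ / 2), cleaf l ∈ Set.Icc (0:ℝ) 1 ∧
      (∫ t in (cleaf l)..1, 1 / Real.sqrt (1 - t ^ 4)) = l) :
    ∀ l ∈ Set.Icc 0 (π₂ / 2),
      derivWithin cleaf (Set.Icc 0 (π₂ / 2)) l = -Real.sqrt (1 - (cleaf l) ^ 4) := by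
  set s : Set ℝ := Set.Icc 0 (π₂ / 2) with hs
  have hC : ∀ l ∈ s, cleaf l ∈ Icc (0:ℝ) 1 := fun l hl => (hc l hl).1
  have hLF : ∀ l ∈ s, LF (cleaf l) = l := fun l hl => (hc l hl).2
  have hLF0 : LF 0 = π₂ / 2 := by
    show (∫ t in (0:ℝ)..1, lf t) = π₂ / 2
    rw [hπ]; show (∫ t in (0:ℝ)..1, lf t) = 2 * (∫ t in (0:ℝ)..1, lf t) / 2; ring
  have h1π : (1:ℝ) ≤ π₂ / 2 := by
    have h := LF_lower' (le_refl 0) zero_le_one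
    simpa [hLF0] using h
  have h0π : (0:ℝ) < π₂ / 2 := lt_of_lt_of_le one_pos h1π
  have h0s : (0:ℝ) ∈ s := ⟨le_refl 0, h0π.le⟩
  have hsurj : ∀ r ∈ Icc (0:ℝ) 1, LF r ∈ s ∧ cleaf (LF r) = r := by
    intro r hr
    have hmem : LF r ∈ s := by
      constructor
      · have := LF_anti hr (by constructor <;> norm_num) hr.2
        rw [LF_one] at this; exact this
      · have := LF_anti (by constructor <;> norm_num) hr hr.1
        rw [hLF0] at this; exact this
    exact ⟨hmem, LF_strictAnti.injOn (hC _ hmem) hr (hLF _ hmem)⟩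
  have hanti : StrictAntiOn cleaf s := by
    intro a ha b hb hab
    rcases lt_trichotomy (cleaf b) (cleaf a) with h | h | h
    · exact h
    · exact absurd (by rw [← hLF a ha, ← hLF b hb, h]) hab.ne
    · exfalso
      have := LF_strictAnti (hC a ha) (hC b hb) h
      rw [hLF a ha, hLF b hb] at this
      exact absurd hab (not_lt.2 this.le)
  have hcont : ∀ a ∈ s, 0 < a → ContinuousWithinAt cleaf s a := by
    intro a ha h0a
    have hm : StrictMonoOn (fun l => -cleaf l) s := fun x hx y hy hxy => neg_lt_neg (hanti hx hy hxy)
    have hca1 : cleaf a < 1 := by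
      rcases lt_or_eq_of_le (hC a ha).2 with h | h
      · exact h
      · exfalso
        have := hLF a ha
        rw [h, LF_one] at this
        exact absurd this.symm (ne_of_gt h0a)
    have hleft : ContinuousWithinAt (fun l => -cleaf l) (Iic a) a := by
      apply hm.continuousWithinAt_left_of_exists_between (Icc_mem_nhdsLE_of_mem ⟨h0a, ha.2⟩)
      intro b hb
      have hb' : b < -cleaf a := hb
      set r := min (-b) ((cleaf a + 1)/2) with hr
      have hr0 : 0 ≤ r := le_min (by linarith [(hC a ha).1]) (by linarith [(hC a ha).1])
      have hr1 : r ≤ 1 := le_trans (min_le_right _ _) (by linarith)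
      have hrgt : cleaf a < r := lt_min (by linarith) (by linarith)
      clear_value r
      obtain ⟨hmem, hcl⟩ := hsurj r ⟨hr0, hr1⟩
      refine ⟨LF r, hmem, ?_, ?_⟩
      · simp only [hcl]; linarith [min_le_left (-b) ((cleaf a + 1)/2)]
      · simp only [hcl]; linarith
    rcases eq_or_lt_of_le ha.2 with heq | hlt
    · have hmono : ContinuousWithinAt (fun l => -cleaf l) s a :=
        hleft.mono (fun x hx => le_of_le_of_eq hx.2 heq.symm)
      exact hmono.neg.congr (fun x _ => (neg_neg (cleaf x)).symm) (neg_neg (cleaf a)).symm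
    · have hca0 : 0 < cleaf a := by
        rcases lt_or_eq_of_le (hC a ha).1 with h | h
        · exact h
        · exfalso
          have := hLF a ha
          rw [← h, hLF0] at this
          exact absurd this (ne_of_gt hlt)
      have hright : ContinuousWithinAt (fun l => -cleaf l) (Ici a) a := by
        apply hm.continuousWithinAt_right_of_exists_between (Icc_mem_nhdsGE_of_mem ⟨ha.1, hlt⟩)
        intro b hb
        have hb' : -cleaf a < b := hb
        set r := max (-b) (cleaf a / 2) with hr
        have hrlt : r < cleaf a := max_lt (by linarith) (by linarith)
        have hr0 : 0 ≤ r := le_trans (by linarith) (le_max_right _ _)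
        have hr1 : r ≤ 1 := le_trans hrlt.le (hC a ha).2
        obtain ⟨hmem, hcl⟩ := hsurj r ⟨hr0, hr1⟩
        refine ⟨LF r, hmem, ?_, ?_⟩
        · simp only [hcl]; linarith
        · simp only [hcl]; linarith [le_max_left (-b) (cleaf a / 2)]
      have hunion : ContinuousWithinAt (fun l => -cleaf l) s a :=
        (hleft.union hright).mono (fun x _ => le_total x a)
      have := hunion.neg
      exact this.congr (fun x _ => (neg_neg (cleaf x)).symm) (neg_neg (cleaf a)).symm
  intro l hl
  have hUD : UniqueDiffWithinAt ℝ s l := uniqueDiffOn_Icc h0π l hl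
  rcases eq_or_lt_of_le hl.1 with h0 | h0
  · -- l = 0
    have h0l : l = 0 := h0.symm
    subst h0l
    have hc1 : cleaf 0 = 1 := by
      rcases lt_or_eq_of_le (hC 0 h0s).2 with h | h
      · exfalso
        have hlow := LF_lower' (hC 0 h0s).1 h.le
        rw [hLF 0 h0s] at hlow
        have : (0:ℝ) < Real.sqrt (1 - cleaf 0) := Real.sqrt_pos.2 (by linarith)
        linarith
      · exact h
    have hD : HasDerivWithinAt cleaf 0 s 0 := by
      rw [hasDerivWithinAt_iff_tendsto_slope]
      apply squeeze_zero_norm' (a := fun l => l)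
      · filter_upwards [self_mem_nhdsWithin] with x hx
        have hx0 : 0 < x := lt_of_le_of_ne hx.1.1 (Ne.symm hx.2)
        have hcx := hC x hx.1
        have hkey : 1 - cleaf x ≤ x * x := by
          have h1 : Real.sqrt (1 - cleaf x) ≤ x := by
            have h2 := LF_lower' hcx.1 hcx.2
            rwa [hLF x hx.1] at h2
          calc 1 - cleaf x = Real.sqrt (1 - cleaf x) ^ 2 :=
                (Real.sq_sqrt (by linarith [hcx.2])).symm
          _ ≤ x ^ 2 := pow_le_pow_left₀ (Real.sqrt_nonneg _) h1 2
          _ = x * x := sq x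
        rw [slope_def_field, hc1]
        rw [Real.norm_eq_abs, abs_div, abs_of_nonpos (by linarith [hcx.2]), abs_of_pos (by simpa using hx0)]
        rw [div_le_iff₀ (by simpa using hx0)]
        simp only [sub_zero]
        nlinarith
      · exact tendsto_id.mono_left nhdsWithin_le_nhds
    rw [hD.derivWithin hUD, hc1]
    norm_num
  · -- 0 < l
    have hx := hC l hl
    have hx1 : cleaf l < 1 := by
      rcases lt_or_eq_of_le hx.2 with h | h
      · exact h
      · exfalso
        have := hLF l hl
        rw [h, LF_one] at this
        exact absurd this.symm (ne_of_gt h0)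
    have h4 : cleaf l ^ 4 < 1 := lt_of_le_of_lt (pow4_le hx.1 hx1.le) hx1
    have hsq : (0:ℝ) < Real.sqrt (1 - cleaf l ^ 4) := Real.sqrt_pos.2 (by linarith)
    have hF := LF_hasDeriv hx.1 hx1
    have hf' : -(lf (cleaf l)) ≠ 0 := neg_ne_zero.2 (ne_of_gt (lf_pos hx.1 hx1))
    have hD : HasDerivWithinAt cleaf (-(lf (cleaf l)))⁻¹ s l :=
      inv_deriv hl hC hLF (hcont l hl h0) hF hf'
    have hval : (-(lf (cleaf l)))⁻¹ = -Real.sqrt (1 - cleaf l ^ 4) := by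
      show (-(1 / Real.sqrt (1 - cleaf l ^ 4)))⁻¹ = -Real.sqrt (1 - cleaf l ^ 4)
      field_simp
    rw [hval] at hD
    exact hD.derivWithin hUD
end

section
/- For all l ∈ [0, π_2/2], cleaf_2(l)² = (1 - sleaf_2(l)²)/(1 + sleaf_2(l)²), and equivalently sleaf_2(l)² = (1 - cleaf_2(l)²)/(1 + cleaf_2(l)²). -/
/-! With `φ(s) = √((1 - s²)/(1 + s²))` (`clOfSl`) one has `1 - φ⁴ = (2s/(1 + s²))²`, and a direct
computation shows that `arcsl s + arcsl (φ s)` has derivative zero on `(0, 1)`, where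
`arcsl r = ∫₀ʳ dt/√(1 - t⁴)`. Evaluating at `s = 0` gives `arcsl s + arcsl (φ s) = arcsl 1`.
Hence if `arcsl s = l = arcsl 1 - arcsl c`, then `c = φ s` because `arcsl` is strictly increasing
on `[0, 1]`, i.e. `c² + s² + c²s² = 1`, which is symmetric in `c` and `s`. -/

open MeasureTheory intervalIntegral Set

noncomputable section

def arcslIntegrand (t : ℝ) : ℝ := 1 / √(1 - t ^ 4)

def arcsl (r : ℝ) : ℝ := ∫ t in (0 : ℝ)..r, arcslIntegrand t

def clOfSl (s : ℝ) : ℝ := √((1 - s ^ 2) / (1 + s ^ 2))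

end

lemma measurable_arcslIntegrand : Measurable arcslIntegrand :=
  measurable_const.div (Real.continuous_sqrt.measurable.comp (by fun_prop))

lemma continuousAt_arcslIntegrand {s : ℝ} (hs : s ^ 4 < 1) : ContinuousAt arcslIntegrand s :=
  continuousAt_const.div (by fun_prop) (Real.sqrt_pos.2 (sub_pos.2 hs)).ne'

lemma arcslIntegrand_pos {s : ℝ} (hs : s ^ 4 < 1) : 0 < arcslIntegrand s :=
  one_div_pos.2 (Real.sqrt_pos.2 (sub_pos.2 hs))

-- `1 - t⁴ = (1 - t)(1 + t)(1 + t²) ≥ 1 - t` on `[0, 1]`: `(1 - t)^(-1/2)` is an integrable majorant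
lemma arcslIntegrand_le_rpow {t : ℝ} (ht : t ∈ Icc (0 : ℝ) 1) :
    arcslIntegrand t ≤ (1 - t) ^ (-(1 / 2) : ℝ) := by
  have h1t : 0 ≤ 1 - t := sub_nonneg.2 ht.2
  rw [Real.rpow_neg h1t, ← Real.sqrt_eq_rpow, ← one_div, arcslIntegrand]
  rcases ht.2.eq_or_lt with rfl | ht1
  · norm_num
  · apply one_div_le_one_div_of_le (Real.sqrt_pos.2 (by linarith))
    apply Real.sqrt_le_sqrt
    nlinarith [mul_nonneg (mul_nonneg ht.1 h1t) (by nlinarith [ht.1] : (0 : ℝ) ≤ 1 + t + t ^ 2)]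

lemma intervalIntegrable_arcslIntegrand : IntervalIntegrable arcslIntegrand volume 0 1 := by
  have hmaj : IntervalIntegrable (fun t : ℝ => (1 - t) ^ (-(1 / 2) : ℝ)) volume 0 1 := by
    simpa using ((intervalIntegrable_rpow' (a := 0) (b := 1) (r := -(1 / 2))
      (by norm_num)).comp_sub_left 1).symm
  refine hmaj.mono_fun measurable_arcslIntegrand.aestronglyMeasurable ?_
  rw [uIoc_of_le zero_le_one]
  refine (ae_restrict_iff' measurableSet_Ioc).2 (Filter.Eventually.of_forall fun t ht => ?_)
  have hmem : t ∈ Icc (0 : ℝ) 1 := Ioc_subset_Icc_self ht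
  dsimp only
  rw [Real.norm_of_nonneg (by unfold arcslIntegrand; positivity),
    Real.norm_of_nonneg (Real.rpow_nonneg (sub_nonneg.2 hmem.2) _)]
  exact arcslIntegrand_le_rpow hmem

lemma intervalIntegrable_arcslIntegrand_of_mem {a b : ℝ} (ha : a ∈ Icc (0 : ℝ) 1)
    (hb : b ∈ Icc (0 : ℝ) 1) : IntervalIntegrable arcslIntegrand volume a b :=
  intervalIntegrable_arcslIntegrand.mono_set <| by
    rw [uIcc_of_le zero_le_one]
    exact uIcc_subset_Icc ha hb

lemma continuousOn_arcsl : ContinuousOn arcsl (Icc 0 1) := by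
  have h := continuousOn_primitive_interval (μ := volume) (f := arcslIntegrand)
    (by rw [uIcc_of_le zero_le_one]
        exact (intervalIntegrable_iff_integrableOn_Icc_of_le zero_le_one).1
          intervalIntegrable_arcslIntegrand)
  rwa [uIcc_of_le zero_le_one] at h

lemma hasDerivAt_arcsl {s : ℝ} (hs : s ∈ Ico (0 : ℝ) 1) : HasDerivAt arcsl (arcslIntegrand s) s :=
  integral_hasDerivAt_right (intervalIntegrable_arcslIntegrand_of_mem ⟨le_rfl, zero_le_one⟩
      (Ico_subset_Icc_self hs))
    measurable_arcslIntegrand.stronglyMeasurable.stronglyMeasurableAtFilter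
    (continuousAt_arcslIntegrand (pow_lt_one₀ hs.1 hs.2 four_ne_zero))

lemma strictMonoOn_arcsl : StrictMonoOn arcsl (Icc 0 1) := by
  refine strictMonoOn_of_deriv_pos (convex_Icc 0 1) continuousOn_arcsl fun x hx => ?_
  rw [interior_Icc] at hx
  rw [(hasDerivAt_arcsl (Ioo_subset_Ico_self hx)).deriv]
  exact arcslIntegrand_pos (pow_lt_one₀ hx.1.le hx.2 four_ne_zero)

lemma arcsl_add_integral_eq_arcsl_one {c : ℝ} (hc : c ∈ Icc (0 : ℝ) 1) :
    arcsl c + ∫ t in c..1, arcslIntegrand t = arcsl 1 :=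
  integral_add_adjacent_intervals
    (intervalIntegrable_arcslIntegrand_of_mem ⟨le_rfl, zero_le_one⟩ hc)
    (intervalIntegrable_arcslIntegrand_of_mem hc ⟨zero_le_one, le_rfl⟩)

lemma continuous_clOfSl : Continuous clOfSl :=
  Real.continuous_sqrt.comp <| by fun_prop (disch := intro x; positivity)

lemma clOfSl_mem_Icc (s : ℝ) : clOfSl s ∈ Icc (0 : ℝ) 1 := by
  refine ⟨Real.sqrt_nonneg _, Real.sqrt_le_one.2 ?_⟩
  rw [div_le_one (by positivity)]
  nlinarith [sq_nonneg s]

lemma clOfSl_sq {s : ℝ} (hs : s ^ 2 ≤ 1) : clOfSl s ^ 2 = (1 - s ^ 2) / (1 + s ^ 2) :=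
  Real.sq_sqrt (div_nonneg (sub_nonneg.2 hs) (by positivity))

lemma one_add_sq_mul_clOfSl (s : ℝ) : (1 + s ^ 2) * clOfSl s = √(1 - s ^ 4) := by
  have hA : (1 + s ^ 2) ≠ 0 := by positivity
  have h : 1 - s ^ 4 = (1 + s ^ 2) ^ 2 * ((1 - s ^ 2) / (1 + s ^ 2)) := by
    field_simp
    ring
  rw [h, Real.sqrt_mul (sq_nonneg _), Real.sqrt_sq (by positivity), clOfSl]

lemma arcslIntegrand_clOfSl {s : ℝ} (hs : s ∈ Icc (0 : ℝ) 1) :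
    arcslIntegrand (clOfSl s) = (1 + s ^ 2) / (2 * s) := by
  have hA : (1 + s ^ 2) ≠ 0 := by positivity
  have h4 : 1 - clOfSl s ^ 4 = (2 * s / (1 + s ^ 2)) ^ 2 := by
    rw [show clOfSl s ^ 4 = (clOfSl s ^ 2) ^ 2 by ring, clOfSl_sq (by nlinarith [hs.1, hs.2])]
    field_simp
    ring
  rw [arcslIntegrand, h4, Real.sqrt_sq (by have := hs.1; positivity), one_div_div]

lemma hasDerivAt_clOfSl {s : ℝ} (hs : s ^ 2 ≠ 1) :
    HasDerivAt clOfSl (-2 * s / ((1 + s ^ 2) * √(1 - s ^ 4))) s := by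
  have hA : (1 + s ^ 2) ≠ 0 := by positivity
  have hu : HasDerivAt (fun x : ℝ => (1 - x ^ 2) / (1 + x ^ 2)) (-4 * s / (1 + s ^ 2) ^ 2) s := by
    refine (((hasDerivAt_pow 2 s).const_sub 1).div
      ((hasDerivAt_pow 2 s).const_add 1) hA).congr_deriv ?_
    field_simp
    ring
  have hu0 : (1 - s ^ 2) / (1 + s ^ 2) ≠ 0 := div_ne_zero (sub_ne_zero.2 (Ne.symm hs)) hA
  refine (hu.sqrt hu0).congr_deriv ?_
  rw [← one_add_sq_mul_clOfSl, clOfSl]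
  simp only [div_eq_mul_inv, mul_inv, ← inv_pow]
  ring

lemma hasDerivAt_arcsl_add_arcsl_clOfSl {s : ℝ} (hs : s ∈ Ioo (0 : ℝ) 1) :
    HasDerivAt (fun x => arcsl x + arcsl (clOfSl x)) 0 s := by
  have hs4 : 0 < √(1 - s ^ 4) := Real.sqrt_pos.2 (sub_pos.2 (pow_lt_one₀ hs.1.le hs.2 four_ne_zero))
  have hcl : clOfSl s ∈ Ico (0 : ℝ) 1 := by
    refine ⟨(clOfSl_mem_Icc s).1, ?_⟩
    rw [clOfSl, Real.sqrt_lt' one_pos, one_pow, div_lt_one (by positivity)]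
    nlinarith [hs.1]
  have h := (hasDerivAt_arcsl (Ioo_subset_Ico_self hs)).add
    ((hasDerivAt_arcsl hcl).comp s (hasDerivAt_clOfSl (by nlinarith [hs.1, hs.2])))
  refine h.congr_deriv ?_
  rw [arcslIntegrand_clOfSl (Ioo_subset_Icc_self hs), arcslIntegrand]
  have : s ≠ 0 := hs.1.ne'
  field_simp
  ring

lemma arcsl_add_arcsl_clOfSl {s : ℝ} (hs : s ∈ Icc (0 : ℝ) 1) :
    arcsl s + arcsl (clOfSl s) = arcsl 1 := by
  have h0 : arcsl 0 + arcsl (clOfSl 0) = arcsl 1 := by simp [arcsl, clOfSl]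
  rcases hs.1.eq_or_lt with rfl | hs0
  · exact h0
  have hcont : ContinuousOn (fun x => arcsl x + arcsl (clOfSl x)) (Icc 0 s) :=
    (continuousOn_arcsl.add (continuousOn_arcsl.comp continuous_clOfSl.continuousOn
      fun x _ => clOfSl_mem_Icc x)).mono (Icc_subset_Icc le_rfl hs.2)
  obtain ⟨x, hx, hslope⟩ := exists_hasDerivAt_eq_slope _ (fun _ => 0) hs0 hcont
    fun x hx => hasDerivAt_arcsl_add_arcsl_clOfSl ⟨hx.1, hx.2.trans_le hs.2⟩
  have hdiff := (div_eq_zero_iff.1 hslope.symm).resolve_right (sub_ne_zero.2 hs0.ne')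
  linarith [sub_eq_zero.1 hdiff]

theorem leaf_sq_relation_general (π₂ : ℝ)
    (sleaf : ℝ → ℝ)
    (hs : ∀ l ∈ Set.Icc 0 (π₂ / 2), sleaf l ∈ Set.Icc (0:ℝ) 1 ∧
      (∫ t in (0:ℝ)..(sleaf l), 1 / Real.sqrt (1 - t ^ 4)) = l)
    (cleaf : ℝ → ℝ)
    (hc : ∀ l ∈ Set.Icc 0 (π₂ / 2), cleaf l ∈ Set.Icc (0:ℝ) 1 ∧
      (∫ t in (cleaf l)..1, 1 / Real.sqrt (1 - t ^ 4)) = l) :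
    ∀ l ∈ Set.Icc 0 (π₂ / 2),
      (cleaf l) ^ 2 = (1 - (sleaf l) ^ 2) / (1 + (sleaf l) ^ 2) ∧
      (sleaf l) ^ 2 = (1 - (cleaf l) ^ 2) / (1 + (cleaf l) ^ 2) := by
  intro l hl
  obtain ⟨hs_mem, hs_val⟩ := hs l hl
  obtain ⟨hc_mem, hc_val⟩ := hc l hl
  have harcsl : arcsl (cleaf l) = arcsl (clOfSl (sleaf l)) := by
    have h₁ := arcsl_add_integral_eq_arcsl_one hc_mem
    have h₂ := arcsl_add_arcsl_clOfSl hs_mem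
    change arcsl (sleaf l) = l at hs_val
    change ∫ t in cleaf l..1, arcslIntegrand t = l at hc_val
    linarith
  have hc_eq : cleaf l = clOfSl (sleaf l) :=
    strictMonoOn_arcsl.injOn hc_mem (clOfSl_mem_Icc _) harcsl
  have hc_sq : cleaf l ^ 2 = (1 - sleaf l ^ 2) / (1 + sleaf l ^ 2) := by
    rw [hc_eq, clOfSl_sq (by nlinarith [hs_mem.1, hs_mem.2])]
  refine ⟨hc_sq, ?_⟩
  rw [eq_div_iff (by positivity)] at hc_sq ⊢
  linarith

theorem leaf_sq_relation (π₂ : ℝ) (hπ : π₂ = 2 * ∫ t in (0:ℝ)..1, 1 / Real.sqrt (1 - t ^ 4))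
    (sleaf : ℝ → ℝ)
    (hs : ∀ l ∈ Set.Icc 0 (π₂ / 2), sleaf l ∈ Set.Icc (0:ℝ) 1 ∧
      (∫ t in (0:ℝ)..(sleaf l), 1 / Real.sqrt (1 - t ^ 4)) = l)
    (cleaf : ℝ → ℝ)
    (hc : ∀ l ∈ Set.Icc 0 (π₂ / 2), cleaf l ∈ Set.Icc (0:ℝ) 1 ∧
      (∫ t in (cleaf l)..1, 1 / Real.sqrt (1 - t ^ 4)) = l) :
    ∀ l ∈ Set.Icc 0 (π₂ / 2),
      (cleaf l) ^ 2 = (1 - (sleaf l) ^ 2) / (1 + (sleaf l) ^ 2) ∧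
      (sleaf l) ^ 2 = (1 - (cleaf l) ^ 2) / (1 + (cleaf l) ^ 2) :=
  leaf_sq_relation_general π₂ sleaf hs cleaf hc
end

section
/- For the lemniscate r² = cos(2θ) in polar coordinates, the arc length from the point (1,0) (θ=0) to the point with radius r ∈ (0,1] equals ∫_r^1 dt/√(1-t⁴). Consequently, cleaf_2 of the arc length l from (1,0) equals the radial distance r of the corresponding point. -/
/-!
Parametrize the branch by its radius: the point of radius `s` has polar angle
`θ(s) = arccos(s²)/2`. For a curve `s ↦ (s cos θ(s), s sin θ(s))` the squared speed is
`1 + s² θ'(s)²`, and here `θ'(s) = -s/√(1-s⁴)`, so the speed is `1/√(1-s⁴)`; this gives the arc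
length. The integrand is positive, so `r ↦ ∫_r^1 dt/√(1-t⁴)` is strictly decreasing on `[0,1]`,
and since `cleaf` is a right inverse of it on `[0, π₂/2]`, it is also a left inverse.
-/

open MeasureTheory intervalIntegral Real Set

lemma intervalIntegrable_one_div_sqrt_one_sub_pow {n : ℕ} (hn : n ≠ 0) :
    IntervalIntegrable (fun t : ℝ => 1 / √(1 - t ^ n)) volume 0 1 := by
  have hdom : IntervalIntegrable (fun x : ℝ => (1 - x) ^ (-(1 / 2) : ℝ)) volume 0 1 := by
    have h := (intervalIntegrable_rpow' (a := 0) (b := 1) (r := -(1 / 2)) (by norm_num)).comp_sub_left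
      1
    norm_num at h
    exact h.symm
  have hmeas : Measurable fun t : ℝ => 1 / √(1 - t ^ n) := by fun_prop
  refine hdom.mono_fun hmeas.aestronglyMeasurable ?_
  rw [Filter.EventuallyLE, ae_restrict_iff' measurableSet_uIoc]
  refine Filter.Eventually.of_forall fun x hx => ?_
  rw [uIoc_of_le zero_le_one] at hx
  obtain ⟨hx0, hx1⟩ := hx
  rw [norm_of_nonneg (by positivity), norm_of_nonneg (by positivity),
    rpow_neg (by linarith), ← sqrt_eq_rpow, ← one_div]
  rcases hx1.eq_or_lt with rfl | hx1
  · simp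
  -- `1 - x ≤ 1 - x ^ n` on `[0, 1]`, so the integrand is dominated by `(1 - x)^(-1/2)`
  exact one_div_le_one_div_of_le (sqrt_pos.mpr (by linarith))
    (sqrt_le_sqrt (by linarith [pow_le_of_le_one hx0.le hx1.le hn]))

lemma strictAntiOn_integral_left {f : ℝ → ℝ} {a b : ℝ} (hf : IntervalIntegrable f volume a b)
    (hpos : ∀ x ∈ Ioo a b, 0 < f x) :
    StrictAntiOn (fun x => ∫ t in x..b, f t) (Icc a b) := by
  intro x ⟨hax, hxb⟩ y ⟨hay, hyb⟩ hxy
  have hint : ∀ c d, c ∈ Icc a b → d ∈ Icc a b → IntervalIntegrable f volume c d :=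
    fun c d hc hd => hf.mono_set (uIcc_subset_uIcc (Icc_subset_uIcc hc) (Icc_subset_uIcc hd))
  have hsplit := integral_add_adjacent_intervals (hint x y ⟨hax, hxb⟩ ⟨hay, hyb⟩)
    (hint y b ⟨hay, hyb⟩ ⟨hax.trans hxb, le_rfl⟩)
  have hxy_pos : 0 < ∫ t in x..y, f t :=
    intervalIntegral_pos_of_pos_on (hint x y ⟨hax, hxb⟩ ⟨hay, hyb⟩)
      (fun t ht => hpos t ⟨hax.trans_lt ht.1, ht.2.trans_le hyb⟩) hxy
  dsimp only
  linarith

lemma hasDerivAt_arccos_sq_div_two {t : ℝ} (ht : t ^ 2 < 1) :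
    HasDerivAt (fun s => arccos (s ^ 2) / 2) (-(t / √(1 - t ^ 4))) t := by
  have harccos := hasDerivAt_arccos (x := t ^ 2) (by nlinarith) ht.ne
  have hsq : HasDerivAt (fun s : ℝ => s ^ 2) (2 * t) t := by simpa using hasDerivAt_pow 2 t
  refine ((harccos.comp (h := fun s : ℝ => s ^ 2) t hsq).div_const 2).congr_deriv ?_
  rw [← pow_mul]
  ring

lemma polar_speed_sq {θ : ℝ → ℝ} {θ' t : ℝ} (hθ : HasDerivAt θ θ' t) :
    deriv (fun s => s * cos (θ s)) t ^ 2 + deriv (fun s => s * sin (θ s)) t ^ 2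
      = 1 + t ^ 2 * θ' ^ 2 := by
  rw [((hasDerivAt_id' t).fun_mul hθ.cos).deriv, ((hasDerivAt_id' t).fun_mul hθ.sin).deriv]
  linear_combination (1 + t ^ 2 * θ' ^ 2) * sin_sq_add_cos_sq (θ t)

lemma lemniscate_speed {t : ℝ} (ht : t ^ 2 < 1) :
    √(deriv (fun s => s * cos (arccos (s ^ 2) / 2)) t ^ 2 +
        deriv (fun s => s * sin (arccos (s ^ 2) / 2)) t ^ 2)
      = 1 / √(1 - t ^ 4) := by
  have h4 : 0 < 1 - t ^ 4 := by nlinarith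
  rw [polar_speed_sq (hasDerivAt_arccos_sq_div_two ht), neg_sq, div_pow, sq_sqrt h4.le,
    one_div, ← sqrt_inv]
  congr 1
  field_simp
  ring

theorem lemniscate_arc_length_cleaf (π₂ : ℝ) (hπ : π₂ = 2 * ∫ t in (0:ℝ)..1, 1 / Real.sqrt (1 - t ^ 4))
    (cleaf : ℝ → ℝ)
    (hc : ∀ l ∈ Set.Icc 0 (π₂ / 2), cleaf l ∈ Set.Icc (0:ℝ) 1 ∧
      (∫ t in (cleaf l)..1, 1 / Real.sqrt (1 - t ^ 4)) = l) :
    ∀ r ∈ Set.Ioc (0:ℝ) 1,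
      (∫ t in r..1,
        Real.sqrt ((deriv (fun s => s * Real.cos (Real.arccos (s ^ 2) / 2)) t) ^ 2 +
          (deriv (fun s => s * Real.sin (Real.arccos (s ^ 2) / 2)) t) ^ 2))
        = (∫ t in r..1, 1 / Real.sqrt (1 - t ^ 4)) ∧
      cleaf (∫ t in r..1, 1 / Real.sqrt (1 - t ^ 4)) = r := by
  intro r ⟨hr0, hr1⟩
  refine ⟨integral_congr_ae ?_, ?_⟩
  · filter_upwards [Measure.ae_ne volume 1] with t ht1 hmem
    rw [uIoc_of_le hr1] at hmem
    obtain ⟨hrt, ht1'⟩ := hmem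
    exact lemniscate_speed (by nlinarith [lt_of_le_of_ne ht1' ht1])
  have hanti :=
    strictAntiOn_integral_left (intervalIntegrable_one_div_sqrt_one_sub_pow four_ne_zero)
      fun t ⟨ht0, ht1⟩ =>
        one_div_pos.mpr (sqrt_pos.mpr (sub_pos.mpr (pow_lt_one₀ ht0.le ht1 four_ne_zero)))
  have hr : r ∈ Icc (0 : ℝ) 1 := ⟨hr0.le, hr1⟩
  have hl : (∫ t in r..1, 1 / √(1 - t ^ 4)) ∈ Icc 0 (π₂ / 2) := by
    refine ⟨?_, ?_⟩
    · simpa using hanti.antitoneOn hr ⟨zero_le_one, le_rfl⟩ hr1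
    · simpa [hπ] using hanti.antitoneOn ⟨le_rfl, zero_le_one⟩ hr hr0.le
  obtain ⟨hcl, hcl_eq⟩ := hc _ hl
  exact hanti.injOn hcl hr hcl_eq
end

section
/- For all l ∈ [0, π_2/2], sleaf_2(l) = cleaf_2(π_2/2 - l). -/
open MeasureTheory intervalIntegral Set

lemma leaf_integrable : IntervalIntegrable (fun t : ℝ => 1 / Real.sqrt (1 - t ^ 4)) volume 0 1 := by
  have hg : IntervalIntegrable (fun x : ℝ => x ^ (-(1/2) : ℝ)) volume 0 1 :=
    intervalIntegral.intervalIntegrable_rpow' (by norm_num)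
  have hg' : IntervalIntegrable (fun x : ℝ => (1 - x) ^ (-(1/2) : ℝ)) volume 0 1 := by
    have := (hg.comp_sub_left 1).symm
    simpa using this
  apply hg'.mono_fun
  · have hcont : Continuous fun t : ℝ => Real.sqrt (1 - t ^ 4) := by continuity
    have : Measurable fun t : ℝ => (Real.sqrt (1 - t ^ 4))⁻¹ := hcont.measurable.inv
    simpa [one_div] using this.aestronglyMeasurable
  · filter_upwards [MeasureTheory.ae_restrict_mem measurableSet_Ioc] with t ht
    rw [Set.uIoc_of_le (by norm_num : (0:ℝ) ≤ 1)] at ht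
    obtain ⟨ht0, ht1⟩ := ht
    have ht4 : t ^ 4 ≤ t := by
      calc t ^ 4 ≤ t ^ 1 := pow_le_pow_of_le_one ht0.le ht1 (by norm_num)
      _ = t := pow_one t
    have h1 : (0:ℝ) ≤ 1 - t ^ 4 := by linarith
    have h2 : (0:ℝ) ≤ 1 - t := by linarith
    have h3 : 1 - t ≤ 1 - t ^ 4 := by linarith
    simp only [Real.norm_eq_abs]
    rw [abs_of_nonneg (by positivity), abs_of_nonneg (Real.rpow_nonneg h2 _)]
    have hrw : (1 - t) ^ (-(1/2) : ℝ) = (Real.sqrt (1 - t))⁻¹ := by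
      rw [Real.rpow_neg h2, Real.sqrt_eq_rpow]
    rw [hrw, one_div]
    rcases eq_or_lt_of_le ht1 with rfl | hlt
    · simp
    · have h2' : (0:ℝ) < 1 - t := by linarith
      apply inv_anti₀ (Real.sqrt_pos.mpr h2')
      exact Real.sqrt_le_sqrt h3

theorem sleaf_eq_cleaf_shift (π₂ : ℝ) (hπ : π₂ = 2 * ∫ t in (0:ℝ)..1, 1 / Real.sqrt (1 - t ^ 4))
    (sleaf : ℝ → ℝ)
    (hs : ∀ l ∈ Set.Icc 0 (π₂ / 2), sleaf l ∈ Set.Icc (0:ℝ) 1 ∧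
      (∫ t in (0:ℝ)..(sleaf l), 1 / Real.sqrt (1 - t ^ 4)) = l)
    (cleaf : ℝ → ℝ)
    (hc : ∀ l ∈ Set.Icc 0 (π₂ / 2), cleaf l ∈ Set.Icc (0:ℝ) 1 ∧
      (∫ t in (cleaf l)..1, 1 / Real.sqrt (1 - t ^ 4)) = l) :
    ∀ l ∈ Set.Icc 0 (π₂ / 2), sleaf l = cleaf (π₂ / 2 - l) := by
  set f : ℝ → ℝ := fun t => 1 / Real.sqrt (1 - t ^ 4) with hf
  have hint : ∀ a b : ℝ, 0 ≤ a → b ≤ 1 → a ≤ b → IntervalIntegrable f volume a b := by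
    intro a b ha hb hab
    apply leaf_integrable.mono_set
    rw [Set.uIcc_of_le hab, Set.uIcc_of_le (by norm_num : (0:ℝ) ≤ 1)]
    exact Set.Icc_subset_Icc ha hb
  have hstrict : ∀ a b : ℝ, 0 ≤ a → a < b → b ≤ 1 →
      (∫ t in (0:ℝ)..a, f t) < ∫ t in (0:ℝ)..b, f t := by
    intro a b ha hab hb
    have h1 : (∫ t in (0:ℝ)..a, f t) + (∫ t in a..b, f t) = ∫ t in (0:ℝ)..b, f t :=
      intervalIntegral.integral_add_adjacent_intervals (hint 0 a le_rfl (by linarith) ha)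
        (hint a b ha hb hab.le)
    have h2 : 0 < ∫ t in a..b, f t := by
      apply intervalIntegral.intervalIntegral_pos_of_pos_on (hint a b ha hb hab.le)
      · intro x hx
        have hx1 : x < 1 := lt_of_lt_of_le hx.2 hb
        have hx0 : 0 ≤ x := le_trans ha hx.1.le
        have : (0:ℝ) < 1 - x ^ 4 := by
          have := pow_lt_one₀ hx0 hx1 (n := 4) (by norm_num)
          linarith
        simp only [hf]
        positivity
      · exact hab
    linarith
  intro l hl
  obtain ⟨hl0, hl1⟩ := hl
  obtain ⟨⟨hs0, hs1⟩, hsval⟩ := hs l ⟨hl0, hl1⟩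
  have hl' : π₂ / 2 - l ∈ Set.Icc 0 (π₂ / 2) := ⟨by linarith, by linarith⟩
  obtain ⟨⟨hc0, hc1⟩, hcval⟩ := hc (π₂ / 2 - l) hl'
  set c := cleaf (π₂ / 2 - l)
  have hadd : (∫ t in (0:ℝ)..c, f t) + (∫ t in c..1, f t) = ∫ t in (0:ℝ)..1, f t :=
    intervalIntegral.integral_add_adjacent_intervals (hint 0 c le_rfl hc1 hc0)
      (hint c 1 hc0 le_rfl hc1)
  have htot : (∫ t in (0:ℝ)..1, f t) = π₂ / 2 := by rw [hπ]; ring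
  have hceq : (∫ t in (0:ℝ)..c, f t) = l := by
    rw [htot, hcval] at hadd
    linarith
  rcases lt_trichotomy (sleaf l) c with h | h | h
  · exfalso
    have := hstrict (sleaf l) c hs0 h hc1
    rw [hsval, hceq] at this
    exact lt_irrefl _ this
  · exact h
  · exfalso
    have := hstrict c (sleaf l) hc0 h hs1
    rw [hsval, hceq] at this
    exact lt_irrefl _ this
end
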